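/- Let H = L²(π), P a bounded operator on H with PΠ = ΠP = Π and ‖P - Π‖ ≤ λ < 1 (Π the projection onto constants), and P̂ = λI + (1-λ)Π. Then for any bounded self-adjoint operators S₁, S₂ on H: ‖S₁ P S₂‖ ≤ ‖S₁ P̂ S₁‖^{1/2} ‖S₂ P̂ S₂‖^{1/2}. -/

import Mathlib

/-!
Write `u = h - Πh`. Since `PΠ = ΠP = Π = Π²`, one has `Ph₁ = Πh₁ + (P - Π)u₁` with
`(P - Π)u₁ ⟂ range Π`, so `⟪Ph₁, h₂⟫ = ⟪Πh₁, Πh₂⟫ + ⟪(P - Π)u₁, u₂⟫`, which is at most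
`‖Πh₁‖‖Πh₂‖ + λ‖u₁‖‖u₂‖` in absolute value, while Pythagoras gives `⟪P̂h, h⟫ = ‖Πh‖² + λ‖u‖²`.
The Cauchy–Schwarz inequality in `ℝ²` with weights `(1, λ)` then yields
`|⟪Ph₁, h₂⟫| ≤ ⟪P̂h₁, h₁⟫^½ ⟪P̂h₂, h₂⟫^½`. For self-adjoint `S` we have
`⟪P̂Sx, Sx⟫ = ⟪SP̂Sx, x⟫ ≤ ‖SP̂S‖‖x‖²`, so taking `h₁ = S₂x`, `h₂ = S₁y` bounds
`⟪S₁PS₂x, y⟫` on unit vectors.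
-/

open RealInnerProductSpace

section Majorant

variable {E : Type*} [NormedAddCommGroup E] [InnerProductSpace ℝ E] {Pi : E →L[ℝ] E}

theorem apply_apply_of_isSymmetricProjection (hPi : (Pi : E →ₗ[ℝ] E).IsSymmetricProjection)
    (x : E) : Pi (Pi x) = Pi x :=
  LinearMap.congr_fun hPi.isIdempotentElem.eq x

theorem inner_apply_left_eq_inner_apply_apply
    (hPi : (Pi : E →ₗ[ℝ] E).IsSymmetricProjection) (x y : E) : ⟪Pi x, y⟫ = ⟪Pi x, Pi y⟫ := by
  rw [← hPi.isSymmetric.apply_clm, apply_apply_of_isSymmetricProjection hPi]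

theorem inner_apply_sub_apply_eq_zero (hPi : (Pi : E →ₗ[ℝ] E).IsSymmetricProjection)
    (x y : E) : ⟪Pi x, y - Pi y⟫ = 0 := by
  rw [inner_sub_right, inner_apply_left_eq_inner_apply_apply hPi, sub_self]

theorem inner_majorant_apply_self (hPi : (Pi : E →ₗ[ℝ] E).IsSymmetricProjection) (lam : ℝ)
    (x : E) :
    ⟪(lam • ContinuousLinearMap.id ℝ E + (1 - lam) • Pi) x, x⟫ =
      ‖Pi x‖ ^ 2 + lam * ‖x - Pi x‖ ^ 2 := by
  have hpyth : ‖x‖ ^ 2 = ‖Pi x‖ ^ 2 + ‖x - Pi x‖ ^ 2 := by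
    simpa [← sq] using norm_add_sq_eq_norm_sq_add_norm_sq_real
      (inner_apply_sub_apply_eq_zero hPi x x)
  simp only [add_apply, smul_apply, ContinuousLinearMap.id_apply, inner_add_left, real_inner_smul_left,
    inner_apply_left_eq_inner_apply_apply hPi x x, real_inner_self_eq_norm_sq, hpyth]
  ring

theorem inner_apply_eq_inner_add_inner_sub (hPi : (Pi : E →ₗ[ℝ] E).IsSymmetricProjection)
    {P : E →L[ℝ] E} (hPPi : P.comp Pi = Pi) (hPiP : Pi.comp P = Pi) (x y : E) :
    ⟪P x, y⟫ = ⟪Pi x, Pi y⟫ + ⟪(P - Pi) (x - Pi x), y - Pi y⟫ := by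
  have hP : P x = Pi x + (P - Pi) (x - Pi x) := by
    have := DFunLike.congr_fun hPPi x
    simp only [ContinuousLinearMap.comp_apply] at this
    simp [apply_apply_of_isSymmetricProjection hPi, this]
  have hrange : ⟪(P - Pi) (x - Pi x), Pi y⟫ = 0 := by
    have := DFunLike.congr_fun hPiP (x - Pi x)
    simp only [ContinuousLinearMap.comp_apply] at this
    rw [← hPi.isSymmetric.apply_clm, sub_apply, map_sub, this,
      apply_apply_of_isSymmetricProjection hPi, sub_self, inner_zero_left]
  rw [hP, inner_add_left, inner_sub_right, hrange, sub_zero,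
    inner_apply_left_eq_inner_apply_apply hPi]

theorem mul_add_mul_le_sqrt_mul_sqrt {c : ℝ} (hc : 0 ≤ c) (a₁ b₁ a₂ b₂ : ℝ) :
    a₁ * a₂ + c * (b₁ * b₂) ≤ √(a₁ ^ 2 + c * b₁ ^ 2) * √(a₂ ^ 2 + c * b₂ ^ 2) := by
  rw [← Real.sqrt_mul (by positivity)]
  refine (le_abs_self _).trans (Real.abs_le_sqrt ?_)
  nlinarith [mul_nonneg hc (sq_nonneg (a₁ * b₂ - a₂ * b₁))]

theorem abs_inner_apply_le_sqrt_mul_sqrt (hPi : (Pi : E →ₗ[ℝ] E).IsSymmetricProjection)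
    {P : E →L[ℝ] E} (hPPi : P.comp Pi = Pi) (hPiP : Pi.comp P = Pi) {lam : ℝ}
    (hgap : ‖P - Pi‖ ≤ lam) (x y : E) :
    |⟪P x, y⟫| ≤
      √⟪(lam • ContinuousLinearMap.id ℝ E + (1 - lam) • Pi) x, x⟫ *
        √⟪(lam • ContinuousLinearMap.id ℝ E + (1 - lam) • Pi) y, y⟫ := by
  have hrest : |⟪(P - Pi) (x - Pi x), y - Pi y⟫| ≤ lam * (‖x - Pi x‖ * ‖y - Pi y‖) :=
    calc |⟪(P - Pi) (x - Pi x), y - Pi y⟫|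
        ≤ ‖(P - Pi) (x - Pi x)‖ * ‖y - Pi y‖ := abs_real_inner_le_norm _ _
      _ ≤ ‖P - Pi‖ * ‖x - Pi x‖ * ‖y - Pi y‖ := by gcongr; exact (P - Pi).le_opNorm _
      _ ≤ lam * (‖x - Pi x‖ * ‖y - Pi y‖) := by rw [mul_assoc]; gcongr
  rw [inner_majorant_apply_self hPi, inner_majorant_apply_self hPi,
    inner_apply_eq_inner_add_inner_sub hPi hPPi hPiP]
  calc _ ≤ |⟪Pi x, Pi y⟫| + |⟪(P - Pi) (x - Pi x), y - Pi y⟫| := abs_add_le _ _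
    _ ≤ ‖Pi x‖ * ‖Pi y‖ + lam * (‖x - Pi x‖ * ‖y - Pi y‖) :=
      add_le_add (abs_real_inner_le_norm _ _) hrest
    _ ≤ _ := mul_add_mul_le_sqrt_mul_sqrt ((norm_nonneg _).trans hgap) _ _ _ _

end Majorant

section SandwichBound

variable {E : Type*} [NormedAddCommGroup E] [InnerProductSpace ℝ E]

theorem sqrt_inner_apply_apply_le {S : E →L[ℝ] E} (hS : (S : E →ₗ[ℝ] E).IsSymmetric)
    (Q : E →L[ℝ] E) (x : E) : √⟪Q (S x), S x⟫ ≤ √‖S.comp (Q.comp S)‖ * ‖x‖ := by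
  have hle : ⟪Q (S x), S x⟫ ≤ ‖S.comp (Q.comp S)‖ * ‖x‖ ^ 2 :=
    calc ⟪Q (S x), S x⟫ = ⟪S.comp (Q.comp S) x, x⟫ := hS.apply_clm _ _ |>.symm
      _ ≤ ‖S.comp (Q.comp S) x‖ * ‖x‖ := real_inner_le_norm _ _
      _ ≤ ‖S.comp (Q.comp S)‖ * ‖x‖ * ‖x‖ := by gcongr; exact ContinuousLinearMap.le_opNorm _ _
      _ = ‖S.comp (Q.comp S)‖ * ‖x‖ ^ 2 := by ring
  calc √⟪Q (S x), S x⟫ ≤ √(‖S.comp (Q.comp S)‖ * ‖x‖ ^ 2) := Real.sqrt_le_sqrt hle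
    _ = √‖S.comp (Q.comp S)‖ * ‖x‖ := by
      rw [Real.sqrt_mul (norm_nonneg _), Real.sqrt_sq (norm_nonneg _)]

theorem norm_comp_comp_le_sqrt_mul_sqrt {P Q S₁ S₂ : E →L[ℝ] E}
    (hbound : ∀ x y, |⟪P x, y⟫| ≤ √⟪Q x, x⟫ * √⟪Q y, y⟫)
    (hS₁ : (S₁ : E →ₗ[ℝ] E).IsSymmetric) (hS₂ : (S₂ : E →ₗ[ℝ] E).IsSymmetric) :
    ‖S₁.comp (P.comp S₂)‖ ≤ √‖S₁.comp (Q.comp S₁)‖ * √‖S₂.comp (Q.comp S₂)‖ := by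
  refine ContinuousLinearMap.opNorm_le_of_re_inner_le (by positivity) fun x y hx hy ↦ ?_
  calc RCLike.re ⟪S₁.comp (P.comp S₂) x, y⟫ = ⟪P (S₂ x), S₁ y⟫ := hS₁.apply_clm _ _
    _ ≤ |⟪P (S₂ x), S₁ y⟫| := le_abs_self _
    _ ≤ √⟪Q (S₂ x), S₂ x⟫ * √⟪Q (S₁ y), S₁ y⟫ := hbound _ _
    _ ≤ (√‖S₂.comp (Q.comp S₂)‖ * ‖x‖) * (√‖S₁.comp (Q.comp S₁)‖ * ‖y‖) :=
      mul_le_mul (sqrt_inner_apply_apply_le hS₂ Q x) (sqrt_inner_apply_apply_le hS₁ Q y)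
        (Real.sqrt_nonneg _) (by positivity)
    _ = _ := by rw [hx, hy]; ring

end SandwichBound

section ProjectionOntoConstants

open MeasureTheory

variable {Ω : Type*} [MeasurableSpace Ω] {π : Measure Ω} {Pi : Lp ℝ 2 π →L[ℝ] Lp ℝ 2 π}

theorem inner_apply_eq_integral_mul_integral
    (hPi : ∀ h : Lp ℝ 2 π, (Pi h : Ω → ℝ) =ᵐ[π] fun _ => ∫ y, h y ∂π) (h h' : Lp ℝ 2 π) :
    ⟪Pi h, h'⟫ = (∫ y, h y ∂π) * ∫ y, h' y ∂π := by
  rw [L2.inner_def, ← integral_const_mul]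
  refine integral_congr_ae ?_
  filter_upwards [hPi h] with a ha
  simp [ha, mul_comm]

theorem integral_apply_eq_integral [IsProbabilityMeasure π]
    (hPi : ∀ h : Lp ℝ 2 π, (Pi h : Ω → ℝ) =ᵐ[π] fun _ => ∫ y, h y ∂π) (h : Lp ℝ 2 π) :
    ∫ y, Pi h y ∂π = ∫ y, h y ∂π := by
  simp [integral_congr_ae (hPi h)]

theorem isSymmetricProjection_of_coeFn_ae_eq_integral [IsProbabilityMeasure π]
    (hPi : ∀ h : Lp ℝ 2 π, (Pi h : Ω → ℝ) =ᵐ[π] fun _ => ∫ y, h y ∂π) :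
    (Pi : Lp ℝ 2 π →ₗ[ℝ] Lp ℝ 2 π).IsSymmetricProjection where
  isIdempotentElem := LinearMap.ext fun h ↦ ext_inner_right ℝ fun h' ↦ by
    simp only [Module.End.mul_apply, ContinuousLinearMap.coe_coe,
      inner_apply_eq_integral_mul_integral hPi, integral_apply_eq_integral hPi]
  isSymmetric h h' := by
    rw [ContinuousLinearMap.coe_coe, real_inner_comm _ h,
      inner_apply_eq_integral_mul_integral hPi, inner_apply_eq_integral_mul_integral hPi,
      mul_comm]

end ProjectionOntoConstants

open MeasureTheory in
theorem stmt_8_general {Ω : Type*} [MeasurableSpace Ω] (π : Measure Ω) [IsProbabilityMeasure π]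
    (lam : ℝ)
    (P Pi : Lp ℝ 2 π →L[ℝ] Lp ℝ 2 π)
    (hPi : ∀ h : Lp ℝ 2 π, (Pi h : Ω → ℝ) =ᵐ[π] fun _ => ∫ y, h y ∂π)
    (hPPi : P.comp Pi = Pi) (hPiP : Pi.comp P = Pi)
    (hgap : ‖P - Pi‖ ≤ lam)
    (S₁ S₂ : Lp ℝ 2 π →L[ℝ] Lp ℝ 2 π)
    (hS₁ : IsSelfAdjoint S₁) (hS₂ : IsSelfAdjoint S₂) :
    ‖S₁.comp (P.comp S₂)‖ ≤
      Real.sqrt ‖S₁.comp ((lam • ContinuousLinearMap.id ℝ (Lp ℝ 2 π) +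
          (1 - lam) • Pi).comp S₁)‖ *
      Real.sqrt ‖S₂.comp ((lam • ContinuousLinearMap.id ℝ (Lp ℝ 2 π) +
          (1 - lam) • Pi).comp S₂)‖ :=
  norm_comp_comp_le_sqrt_mul_sqrt
    (abs_inner_apply_le_sqrt_mul_sqrt (isSymmetricProjection_of_coeFn_ae_eq_integral hPi)
      hPPi hPiP hgap)
    hS₁.isSymmetric hS₂.isSymmetric

open MeasureTheory in
theorem stmt_8 {Ω : Type*} [MeasurableSpace Ω] (π : Measure Ω) [IsProbabilityMeasure π]
    (lam : ℝ) (hlam : lam < 1)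
    (P Pi : Lp ℝ 2 π →L[ℝ] Lp ℝ 2 π)
    (hPi : ∀ h : Lp ℝ 2 π, (Pi h : Ω → ℝ) =ᵐ[π] fun _ => ∫ y, h y ∂π)
    (hPPi : P.comp Pi = Pi) (hPiP : Pi.comp P = Pi)
    (hgap : ‖P - Pi‖ ≤ lam)
    (S₁ S₂ : Lp ℝ 2 π →L[ℝ] Lp ℝ 2 π)
    (hS₁ : IsSelfAdjoint S₁) (hS₂ : IsSelfAdjoint S₂) :
    ‖S₁.comp (P.comp S₂)‖ ≤
      Real.sqrt ‖S₁.comp ((lam • ContinuousLinearMap.id ℝ (Lp ℝ 2 π) +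
          (1 - lam) • Pi).comp S₁)‖ *
      Real.sqrt ‖S₂.comp ((lam • ContinuousLinearMap.id ℝ (Lp ℝ 2 π) +
          (1 - lam) • Pi).comp S₂)‖ :=
  stmt_8_general π lam P Pi hPi hPPi hPiP hgap S₁ S₂ hS₁ hS₂
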